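/- Pythagorean relation: for discrete probability measures μ = Σ a_i δ_{x_i}, ν = Σ b_j δ_{y_j} on R^n with means x̄, ȳ, one has W₂²(μ, ν) = ‖x̄ − ȳ‖₂² + RW₂²(μ, ν), where RW₂²(μ,ν) = min over s of W₂²(translate of μ by s, ν). -/

import Mathlib

open Finset

noncomputable section

/-- The transportation polytope `Π(a,b)`. -/
def transportPolytope {m1 m2 : ℕ} (a : Fin m1 → ℝ) (b : Fin m2 → ℝ) :
    Set (Fin m1 → Fin m2 → ℝ) :=
  {P | (∀ i j, 0 ≤ P i j) ∧ (∀ i, ∑ j, P i j = a i) ∧ (∀ j, ∑ i, P i j = b j)}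

/-- The translated quadratic transport cost `H(P, s)`. -/
def Hcost {n m1 m2 : ℕ} (x : Fin m1 → EuclideanSpace ℝ (Fin n))
    (y : Fin m2 → EuclideanSpace ℝ (Fin n)) (P : Fin m1 → Fin m2 → ℝ)
    (s : EuclideanSpace ℝ (Fin n)) : ℝ :=
  ∑ i, ∑ j, ‖x i + s - y j‖ ^ 2 * P i j

/-- The (untranslated) quadratic transport cost `E(P)`. -/
def Ecost {n m1 m2 : ℕ} (x : Fin m1 → EuclideanSpace ℝ (Fin n))
    (y : Fin m2 → EuclideanSpace ℝ (Fin n)) (P : Fin m1 → Fin m2 → ℝ) : ℝ :=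
  ∑ i, ∑ j, ‖x i - y j‖ ^ 2 * P i j

end

/-- The minimal quadratic transport cost (squared `W₂` distance) between the
discrete measures `∑ aᵢ δ_{xᵢ}` and `∑ bⱼ δ_{yⱼ}`. -/
noncomputable def OT2 {n m1 m2 : ℕ} (a : Fin m1 → ℝ) (b : Fin m2 → ℝ)
    (x : Fin m1 → EuclideanSpace ℝ (Fin n)) (y : Fin m2 → EuclideanSpace ℝ (Fin n)) : ℝ :=
  sInf {c : ℝ | ∃ P ∈ transportPolytope a b, c = Ecost x y P}

/-
The cost of a fixed coupling `P` changes under the translation `x ↦ x + s` by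
`2⟪x̄ - ȳ, s⟫ + ‖s‖² = ‖x̄ - ȳ + s‖² - ‖x̄ - ȳ‖²`, because only the marginals of `P` enter
the cross term. Hence `W₂²(μ + s, ν) = W₂²(μ, ν) + ‖x̄ - ȳ + s‖² - ‖x̄ - ȳ‖²`, which is
minimized at `s = ȳ - x̄` with value `W₂²(μ, ν) - ‖x̄ - ȳ‖²`.
-/

open RealInnerProductSpace

namespace transportPolytope

variable {m1 m2 : ℕ} {a : Fin m1 → ℝ} {b : Fin m2 → ℝ} {P : Fin m1 → Fin m2 → ℝ}

theorem mul_mem (ha : ∀ i, 0 ≤ a i) (hb : ∀ j, 0 ≤ b j) (hsa : ∑ i, a i = 1)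
    (hsb : ∑ j, b j = 1) : (fun i j => a i * b j) ∈ transportPolytope a b :=
  ⟨fun i j => mul_nonneg (ha i) (hb j),
    fun i => by rw [← mul_sum, hsb, mul_one],
    fun j => by rw [← sum_mul, hsa, one_mul]⟩

theorem sum_sum_smul_left {E : Type*} [AddCommMonoid E] [Module ℝ E]
    (hP : P ∈ transportPolytope a b) (u : Fin m1 → E) :
    ∑ i, ∑ j, P i j • u i = ∑ i, a i • u i := by
  simp only [← sum_smul, hP.2.1]

theorem sum_sum_smul_right {E : Type*} [AddCommMonoid E] [Module ℝ E]
    (hP : P ∈ transportPolytope a b) (v : Fin m2 → E) :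
    ∑ i, ∑ j, P i j • v j = ∑ j, b j • v j := by
  rw [sum_comm]
  simp only [← sum_smul, hP.2.2]

theorem sum_sum_smul_sub {E : Type*} [AddCommGroup E] [Module ℝ E]
    (hP : P ∈ transportPolytope a b) (u : Fin m1 → E) (v : Fin m2 → E) :
    ∑ i, ∑ j, P i j • (u i - v j) = ∑ i, a i • u i - ∑ j, b j • v j := by
  simp only [smul_sub, sum_sub_distrib, sum_sum_smul_left hP, sum_sum_smul_right hP]

theorem sum_sum_eq (hP : P ∈ transportPolytope a b) : ∑ i, ∑ j, P i j = ∑ i, a i := by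
  simpa using sum_sum_smul_left hP (fun _ => (1 : ℝ))

end transportPolytope

theorem Ecost_nonneg {n m1 m2 : ℕ} {a : Fin m1 → ℝ} {b : Fin m2 → ℝ}
    (x : Fin m1 → EuclideanSpace ℝ (Fin n)) (y : Fin m2 → EuclideanSpace ℝ (Fin n))
    {P : Fin m1 → Fin m2 → ℝ} (hP : P ∈ transportPolytope a b) : 0 ≤ Ecost x y P :=
  sum_nonneg fun i _ => sum_nonneg fun j _ => mul_nonneg (sq_nonneg _) (hP.1 i j)

theorem Ecost_translate {n m1 m2 : ℕ} {a : Fin m1 → ℝ} {b : Fin m2 → ℝ}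
    (x : Fin m1 → EuclideanSpace ℝ (Fin n)) (y : Fin m2 → EuclideanSpace ℝ (Fin n))
    (hsa : ∑ i, a i = 1) {P : Fin m1 → Fin m2 → ℝ} (hP : P ∈ transportPolytope a b)
    (s : EuclideanSpace ℝ (Fin n)) :
    Ecost (fun i => x i + s) y P = Ecost x y P
      + (‖(∑ i, a i • x i) - ∑ j, b j • y j + s‖ ^ 2
        - ‖(∑ i, a i • x i) - ∑ j, b j • y j‖ ^ 2) := by
  have hcross : ∑ i, ∑ j, P i j * ⟪x i - y j, s⟫ = ⟪(∑ i, a i • x i) - ∑ j, b j • y j, s⟫ := by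
    simp only [← transportPolytope.sum_sum_smul_sub hP, sum_inner, real_inner_smul_left]
  have hmass : ∑ i, ∑ j, P i j = 1 := (transportPolytope.sum_sum_eq hP).trans hsa
  have hsplit : ∀ i j, ‖x i + s - y j‖ ^ 2 * P i j
      = ‖x i - y j‖ ^ 2 * P i j + 2 * (P i j * ⟪x i - y j, s⟫) + ‖s‖ ^ 2 * P i j := by
    intro i j
    rw [add_sub_right_comm, norm_add_sq_real]
    ring
  simp only [Ecost, hsplit, sum_add_distrib, ← mul_sum, hcross, hmass, mul_one, norm_add_sq_real]
  ring

theorem OT2_eq_csInf_image {n m1 m2 : ℕ} (a : Fin m1 → ℝ) (b : Fin m2 → ℝ)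
    (x : Fin m1 → EuclideanSpace ℝ (Fin n)) (y : Fin m2 → EuclideanSpace ℝ (Fin n)) :
    OT2 a b x y = sInf (Ecost x y '' transportPolytope a b) := by
  simp only [OT2, Set.image, eq_comm]

theorem OT2_translate {n m1 m2 : ℕ} {a : Fin m1 → ℝ} {b : Fin m2 → ℝ}
    (x : Fin m1 → EuclideanSpace ℝ (Fin n)) (y : Fin m2 → EuclideanSpace ℝ (Fin n))
    (hne : (transportPolytope a b).Nonempty) (hsa : ∑ i, a i = 1)
    (s : EuclideanSpace ℝ (Fin n)) :
    OT2 a b (fun i => x i + s) y = OT2 a b x y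
      + (‖(∑ i, a i • x i) - ∑ j, b j • y j + s‖ ^ 2
        - ‖(∑ i, a i • x i) - ∑ j, b j • y j‖ ^ 2) := by
  set c := ‖(∑ i, a i • x i) - ∑ j, b j • y j + s‖ ^ 2
    - ‖(∑ i, a i • x i) - ∑ j, b j • y j‖ ^ 2
  have himage : Ecost (fun i => x i + s) y '' transportPolytope a b
      = OrderIso.addRight c '' (Ecost x y '' transportPolytope a b) := by
    rw [Set.image_image]
    exact Set.image_congr fun P hP => Ecost_translate x y hsa hP s
  have hbdd : BddBelow (Ecost x y '' transportPolytope a b) :=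
    ⟨0, Set.forall_mem_image.2 fun _ hP => Ecost_nonneg x y hP⟩
  rw [OT2_eq_csInf_image, OT2_eq_csInf_image, himage,
    ← (OrderIso.addRight c).map_csInf' (hne.image _) hbdd, OrderIso.addRight_apply]

/-- Pythagorean relation: `W₂²(μ,ν) = ‖x̄ − ȳ‖² + RW₂²(μ,ν)`, where
`RW₂²(μ,ν) = min_s W₂²(μ translated by s, ν)`. -/
theorem stmt9 {n m1 m2 : ℕ}
    (x : Fin m1 → EuclideanSpace ℝ (Fin n)) (y : Fin m2 → EuclideanSpace ℝ (Fin n))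
    (a : Fin m1 → ℝ) (b : Fin m2 → ℝ)
    (ha0 : ∀ i, 0 ≤ a i) (hb0 : ∀ j, 0 ≤ b j)
    (hsa : ∑ i, a i = 1) (hsb : ∑ j, b j = 1) :
    OT2 a b x y
      = ‖(∑ i, a i • x i) - ∑ j, b j • y j‖ ^ 2
        + ⨅ s : EuclideanSpace ℝ (Fin n), OT2 a b (fun i => x i + s) y := by
  have htranslate := OT2_translate x y ⟨_, transportPolytope.mul_mem ha0 hb0 hsa hsb⟩ hsa
  set d := (∑ i, a i • x i) - ∑ j, b j • y j
  have hleast : IsLeast (Set.range fun s => OT2 a b (fun i => x i + s) y) (OT2 a b x y - ‖d‖ ^ 2) :=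
    ⟨⟨-d, by simp only [htranslate, add_neg_cancel, norm_zero]; ring⟩,
      Set.forall_mem_range.2 fun s => by
        rw [htranslate]; linarith [sq_nonneg ‖d + s‖]⟩
  rw [hleast.isGLB.ciInf_eq]
  ring
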